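/- arXiv:2102.00117 — 2 statements merged into one kernel-verified Lean document; each statement's English description precedes it below -/
import Mathlib

section
/- Under Assumption (K) on the kernel k, for every λ∈ℂ, T>0, every n∈ℕ and all f,g∈B_b([0,T],ℂ), the iterates of the operator R_λ satisfy sup_{0≤t≤T}|R_λ^{n+1}g(t)−R_λ^{n+1}f(t)| ≤ (|λ| K_T T^{1−α*})^{n+1} · ∏_{l=1}^{n} (l(1−α*)(1+1/ε)+1)^{−ε/(1+ε)} · ‖g−f‖_∞; moreover, the factor (|λ| K_T T^{1−α*})^{n+1} ∏_{l=1}^{n} (l(1−α*)(1+1/ε)+1)^{−ε/(1+ε)} tends to 0 as n→∞. -/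
open MeasureTheory Filter

noncomputable section

noncomputable def Rop (k : ℝ → ℝ → ℝ) (lam : ℂ) (g : ℝ → ℂ) : ℝ → ℂ :=
  fun t => if 0 < t then 1 - lam * ∫ s in Set.Ioc (0:ℝ) t, (k t s : ℂ) * g s else 1

def BddBorelOn (T : ℝ) (g : ℝ → ℂ) : Prop :=
  Measurable g ∧ ∃ M : ℝ, ∀ t ∈ Set.Icc (0:ℝ) T, ‖g t‖ ≤ M

/-!
Hölder's inequality with the exponents `1 + ε` and `1 + 1/ε` turns (K) into a one-step estimate:
if `‖G s - F s‖ ≤ D s^β` on `[0, T]`, then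
`‖R_λ G t - R_λ F t‖ ≤ |λ| K_T D c_β t^(1 - α* + β)` with `c_β = (β (1 + 1/ε) + 1)^(-ε/(1+ε))`.
Starting from `β = 0` and iterating, each application of `R_λ` gains a factor `|λ| K_T t^(1-α*)`
and a factor `c_{l(1-α*)}`. Since `c_β → 0` as `β → ∞`, successive ratios of the resulting
constants tend to `0`, so the constants tend to `0`.
-/

open Set Topology

theorem tendsto_zero_of_succ_eq_mul {R : Type*} [NormedRing R] [CompleteSpace R] {u r : ℕ → R}
    (hu : ∀ n, u (n + 1) = u n * r n) (hr : Tendsto r atTop (𝓝 0)) :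
    Tendsto u atTop (𝓝 0) := by
  refine (summable_of_ratio_norm_eventually_le (r := 1 / 2) (by norm_num) ?_).tendsto_atTop_zero
  filter_upwards [hr.norm.eventually_le_const (show ‖(0 : R)‖ < 1 / 2 by simp)] with n hn
  rw [hu, mul_comm (1 / 2 : ℝ)]
  exact (norm_mul_le _ _).trans (mul_le_mul_of_nonneg_left hn (norm_nonneg _))

theorem Finset.prod_range_succ_eq_prod_Icc {M : Type*} [CommMonoid M] {f : ℕ → M} (h0 : f 0 = 1)
    (n : ℕ) : ∏ i ∈ Finset.range (n + 1), f i = ∏ i ∈ Finset.Icc 1 n, f i := by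
  rw [Finset.range_eq_Ico, Finset.prod_eq_prod_Ico_succ_bot n.succ_pos, h0, one_mul]
  rfl

theorem rpow_integral_mul_rpow_Ioc {B β q t : ℝ} (hB : 0 ≤ B) (hq : 0 < q) (hβq : -1 < β * q)
    (ht : 0 < t) :
    (∫ s in Ioc 0 t, (B * s ^ β) ^ q) ^ (1 / q) =
      B * (β * q + 1) ^ (-(1 / q)) * t ^ (β + 1 / q) := by
  have hD : 0 < β * q + 1 := by linarith
  have hint : ∫ s in Ioc 0 t, (B * s ^ β) ^ q = B ^ q * (t ^ (β * q + 1) / (β * q + 1)) := by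
    rw [setIntegral_congr_fun measurableSet_Ioc (g := fun s => B ^ q * s ^ (β * q))
      fun s hs => by rw [Real.mul_rpow hB (Real.rpow_nonneg hs.1.le β), ← Real.rpow_mul hs.1.le],
      integral_const_mul, ← intervalIntegral.integral_of_le ht.le, integral_rpow (Or.inl hβq),
      Real.zero_rpow hD.ne', sub_zero]
  rw [hint, Real.mul_rpow (by positivity) (by positivity), ← Real.rpow_mul hB,
    Real.div_rpow (by positivity) hD.le, ← Real.rpow_mul ht.le, mul_one_div_cancel hq.ne',
    Real.rpow_one, Real.rpow_neg hD.le, show (β * q + 1) * (1 / q) = β + 1 / q by field_simp]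
  ring

/-- The `L^q(0,1)`-norm of `s ↦ s ^ β`, for `q = 1 + 1/ε` the exponent conjugate to `1 + ε`. -/
def holderFactor (ε β : ℝ) : ℝ := (β * (1 + 1 / ε) + 1) ^ (-(ε / (1 + ε)))

theorem holderFactor_nonneg {ε β : ℝ} (hε : 0 ≤ ε) (hβ : 0 ≤ β) : 0 ≤ holderFactor ε β :=
  Real.rpow_nonneg (by positivity) _

theorem tendsto_holderFactor_atTop {ε : ℝ} (hε : 0 < ε) : Tendsto (holderFactor ε) atTop (𝓝 0) :=
  (tendsto_rpow_neg_atTop (by positivity)).comp <|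
    tendsto_atTop_add_const_right _ _ (tendsto_id.atTop_mul_const (by positivity))

/-- Assumption (K) on `(0, T]`, with `KT` any upper bound for the supremum `K_T`. -/
def KernelBound (k : ℝ → ℝ → ℝ) (α ε T KT : ℝ) : Prop :=
  ∀ t : ℝ, 0 < t → t ≤ T →
    IntegrableOn (fun s => |k t s| ^ (1 + ε)) (Ioc 0 t) ∧
      t ^ (α - 1 / (1 + ε)) * (∫ s in Ioc (0:ℝ) t, |k t s| ^ (1 + ε)) ^ (1 / (1 + ε)) ≤ KT

namespace KernelBound

variable {k : ℝ → ℝ → ℝ} {α ε T KT t : ℝ}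

theorem memLp (hK : KernelBound k α ε T KT) (hkm : Measurable (Function.uncurry k))
    (hε : 0 < ε) (ht : 0 < t) (htT : t ≤ T) :
    MemLp (fun s => |k t s|) (ENNReal.ofReal (1 + ε)) (volume.restrict (Ioc 0 t)) := by
  refine (integrable_norm_rpow_iff (hkm.of_uncurry_left.abs.aestronglyMeasurable)
    (ENNReal.ofReal_pos.2 (by linarith)).ne' ENNReal.ofReal_ne_top).1 ?_
  simpa [ENNReal.toReal_ofReal (by linarith : (0:ℝ) ≤ 1 + ε), IntegrableOn] using (hK t ht htT).1

theorem integrableOn (hK : KernelBound k α ε T KT) (hkm : Measurable (Function.uncurry k))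
    (hε : 0 < ε) (ht : 0 < t) (htT : t ≤ T) : IntegrableOn (k t) (Ioc 0 t) :=
  (integrable_norm_iff hkm.of_uncurry_left.aestronglyMeasurable).1
    ((hK.memLp hkm hε ht htT).integrable (ENNReal.one_le_ofReal.2 (by linarith)))

theorem rpow_integral_le (hK : KernelBound k α ε T KT) (ht : 0 < t) (htT : t ≤ T) :
    (∫ s in Ioc 0 t, |k t s| ^ (1 + ε)) ^ (1 / (1 + ε)) ≤ KT * t ^ (1 / (1 + ε) - α) := by
  calc (∫ s in Ioc 0 t, |k t s| ^ (1 + ε)) ^ (1 / (1 + ε))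
      = t ^ (1 / (1 + ε) - α) * (t ^ (α - 1 / (1 + ε)) *
          (∫ s in Ioc 0 t, |k t s| ^ (1 + ε)) ^ (1 / (1 + ε))) := by
        rw [← mul_assoc, ← Real.rpow_add ht, sub_add_sub_cancel', sub_self, Real.rpow_zero,
          one_mul]
    _ ≤ t ^ (1 / (1 + ε) - α) * KT := by gcongr; exact (hK t ht htT).2
    _ = KT * t ^ (1 / (1 + ε) - α) := mul_comm _ _

theorem integral_abs_mul_rpow_le (hK : KernelBound k α ε T KT)
    (hkm : Measurable (Function.uncurry k)) (hε : 0 < ε) (ht : 0 < t) (htT : t ≤ T)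
    {B β : ℝ} (hB : 0 ≤ B) (hβ : 0 ≤ β) :
    ∫ s in Ioc 0 t, |k t s| * (B * s ^ β) ≤ KT * B * holderFactor ε β * t ^ (1 - α + β) := by
  have hε' : ε ≠ 0 := hε.ne'
  set q := 1 + 1 / ε with hq_def
  have hq : 0 < q := by positivity
  have hpq : (1 + ε).HolderConjugate q := by
    rw [Real.holderConjugate_iff_eq_conjExponent (by linarith), add_sub_cancel_left, hq_def]
    field_simp; ring
  have hq_inv : 1 / q = ε / (1 + ε) := by rw [hq_def]; field_simp; ring
  have hψ_nonneg : ∀ᵐ s ∂(volume.restrict (Ioc 0 t)), 0 ≤ B * s ^ β := by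
    filter_upwards [ae_restrict_mem measurableSet_Ioc] with s hs
    exact mul_nonneg hB (Real.rpow_nonneg hs.1.le β)
  have hψ : MemLp (fun s => B * s ^ β) (ENNReal.ofReal q) (volume.restrict (Ioc 0 t)) := by
    refine MemLp.of_bound (by fun_prop) (B * t ^ β) ?_
    filter_upwards [ae_restrict_mem measurableSet_Ioc] with s hs
    rw [Real.norm_of_nonneg (mul_nonneg hB (Real.rpow_nonneg hs.1.le β))]
    exact mul_le_mul_of_nonneg_left (Real.rpow_le_rpow hs.1.le hs.2 hβ) hB
  have hβq : -1 < β * q := by nlinarith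
  calc ∫ s in Ioc 0 t, |k t s| * (B * s ^ β)
      ≤ (∫ s in Ioc 0 t, |k t s| ^ (1 + ε)) ^ (1 / (1 + ε)) *
          (∫ s in Ioc 0 t, (B * s ^ β) ^ q) ^ (1 / q) :=
        integral_mul_le_Lp_mul_Lq_of_nonneg hpq (ae_of_all _ fun s => abs_nonneg _) hψ_nonneg
          (hK.memLp hkm hε ht htT) hψ
    _ ≤ KT * t ^ (1 / (1 + ε) - α) * (B * holderFactor ε β * t ^ (β + ε / (1 + ε))) := by
        rw [rpow_integral_mul_rpow_Ioc hB hq hβq ht, hq_inv]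
        refine mul_le_mul_of_nonneg_right (hK.rpow_integral_le ht htT) ?_
        have := holderFactor_nonneg hε.le hβ
        positivity
    _ = KT * B * holderFactor ε β * t ^ (1 - α + β) := by
        rw [mul_mul_mul_comm, ← Real.rpow_add ht,
          show 1 / (1 + ε) - α + (β + ε / (1 + ε)) = 1 - α + β by field_simp; ring]
        ring

end KernelBound

section Rop

variable {k : ℝ → ℝ → ℝ} {lam : ℂ}

theorem Rop_of_nonpos (g : ℝ → ℂ) {t : ℝ} (ht : ¬0 < t) : Rop k lam g t = 1 := if_neg ht

theorem Rop_zero : Rop k lam 0 = 1 := by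
  funext t
  by_cases ht : 0 < t <;> simp [Rop, ht]

theorem measurable_Rop (hkm : Measurable (Function.uncurry k)) {g : ℝ → ℂ} (hg : Measurable g) :
    Measurable (Rop k lam g) := by
  have hset : MeasurableSet {p : ℝ × ℝ | 0 < p.2 ∧ p.2 ≤ p.1} :=
    (measurableSet_lt measurable_const measurable_snd).inter
      (measurableSet_le measurable_snd measurable_fst)
  have hF : StronglyMeasurable fun p : ℝ × ℝ =>
      if 0 < p.2 ∧ p.2 ≤ p.1 then (k p.1 p.2 : ℂ) * g p.2 else 0 :=
    (Measurable.ite hset ((Complex.measurable_ofReal.comp hkm).mul (hg.comp measurable_snd))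
      measurable_const).stronglyMeasurable
  have hRop : Rop k lam g = fun t => if 0 < t then
      1 - lam * ∫ s, if 0 < s ∧ s ≤ t then (k t s : ℂ) * g s else 0 else 1 := by
    funext t
    simp only [Rop, ← integral_indicator measurableSet_Ioc, Set.indicator_apply, Set.mem_Ioc]
  rw [hRop]
  exact Measurable.ite measurableSet_Ioi
    (measurable_const.sub (measurable_const.mul hF.integral_prod_right'.measurable))
    measurable_const

end Rop

namespace KernelBound

variable {k : ℝ → ℝ → ℝ} {α ε T KT : ℝ} {lam : ℂ}

theorem norm_Rop_sub_le (hK : KernelBound k α ε T KT) (hkm : Measurable (Function.uncurry k))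
    (hα : α < 1) (hε : 0 < ε) {F G : ℝ → ℂ} (hF : BddBorelOn T F) (hG : BddBorelOn T G)
    {D β : ℝ} (hD : 0 ≤ D) (hβ : 0 ≤ β) (hGF : ∀ s ∈ Icc 0 T, ‖G s - F s‖ ≤ D * s ^ β)
    {t : ℝ} (ht : t ∈ Icc 0 T) :
    ‖Rop k lam G t - Rop k lam F t‖ ≤ ‖lam‖ * KT * D * holderFactor ε β * t ^ (1 - α + β) := by
  rcases ht.1.eq_or_lt with rfl | ht0
  · rw [Rop_of_nonpos _ (lt_irrefl 0), Rop_of_nonpos _ (lt_irrefl 0), sub_self, norm_zero,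
      Real.zero_rpow (by linarith), mul_zero]
  have hk := hK.integrableOn hkm hε ht0 ht.2
  have hkH : ∀ H : ℝ → ℂ, BddBorelOn T H → IntegrableOn (fun s => (k t s : ℂ) * H s) (Ioc 0 t) := by
    rintro H ⟨hHm, M, hM⟩
    refine hk.ofReal.mul_bdd hHm.aestronglyMeasurable (c := M) ?_
    filter_upwards [ae_restrict_mem measurableSet_Ioc] with s hs
    exact hM s ⟨hs.1.le, hs.2.trans ht.2⟩
  have hmajorant : IntegrableOn (fun s => |k t s| * (D * s ^ β)) (Ioc 0 t) := by
    refine hk.abs.mul_bdd (by fun_prop) (c := D * t ^ β) ?_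
    filter_upwards [ae_restrict_mem measurableSet_Ioc] with s hs
    rw [Real.norm_of_nonneg (mul_nonneg hD (Real.rpow_nonneg hs.1.le β))]
    exact mul_le_mul_of_nonneg_left (Real.rpow_le_rpow hs.1.le hs.2 hβ) hD
  have hdiff : Rop k lam G t - Rop k lam F t =
      -lam * ∫ s in Ioc 0 t, (k t s : ℂ) * (G s - F s) := by
    simp only [Rop, if_pos ht0, mul_sub, integral_sub (hkH G hG) (hkH F hF)]
    ring
  calc ‖Rop k lam G t - Rop k lam F t‖
      = ‖lam‖ * ‖∫ s in Ioc 0 t, (k t s : ℂ) * (G s - F s)‖ := by rw [hdiff, norm_mul, norm_neg]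
    _ ≤ ‖lam‖ * ∫ s in Ioc 0 t, |k t s| * (D * s ^ β) := by
        gcongr
        refine norm_integral_le_of_norm_le hmajorant ?_
        filter_upwards [ae_restrict_mem measurableSet_Ioc] with s hs
        rw [norm_mul, Complex.norm_real, Real.norm_eq_abs]
        exact mul_le_mul_of_nonneg_left (hGF s ⟨hs.1.le, hs.2.trans ht.2⟩) (abs_nonneg _)
    _ ≤ ‖lam‖ * (KT * D * holderFactor ε β * t ^ (1 - α + β)) := by
        gcongr
        exact hK.integral_abs_mul_rpow_le hkm hε ht0 ht.2 hD hβ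
    _ = ‖lam‖ * KT * D * holderFactor ε β * t ^ (1 - α + β) := by ring

theorem bddBorelOn_Rop (hK : KernelBound k α ε T KT) (hkm : Measurable (Function.uncurry k))
    (hα : α < 1) (hε : 0 < ε) (hKT : 0 ≤ KT) {g : ℝ → ℂ} (hg : BddBorelOn T g) :
    BddBorelOn T (Rop k lam g) := by
  obtain ⟨M, hM⟩ := hg.2
  have hzero : BddBorelOn T 0 := ⟨measurable_const, 0, by simp⟩
  have hgM : ∀ s ∈ Icc 0 T, ‖g s - (0 : ℝ → ℂ) s‖ ≤ max M 0 * s ^ (0 : ℝ) := fun s hs => by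
    simpa using (hM s hs).trans (le_max_left M 0)
  refine ⟨measurable_Rop hkm hg.1,
    1 + ‖lam‖ * KT * max M 0 * holderFactor ε 0 * T ^ (1 - α), fun t ht => ?_⟩
  have hdiff := hK.norm_Rop_sub_le (lam := lam) hkm hα hε hzero hg (le_max_right M 0) le_rfl hgM ht
  rw [Rop_zero, Pi.one_apply, add_zero] at hdiff
  have hc := holderFactor_nonneg hε.le (le_refl 0)
  calc ‖Rop k lam g t‖ ≤ ‖(1 : ℂ)‖ + ‖Rop k lam g t - 1‖ := norm_le_norm_add_norm_sub' _ _
    _ ≤ 1 + ‖lam‖ * KT * max M 0 * holderFactor ε 0 * t ^ (1 - α) := by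
        rw [norm_one]; gcongr
    _ ≤ 1 + ‖lam‖ * KT * max M 0 * holderFactor ε 0 * T ^ (1 - α) := by
        have ht0 := ht.1
        gcongr
        exact ht.2

theorem bddBorelOn_iterate_Rop (hK : KernelBound k α ε T KT)
    (hkm : Measurable (Function.uncurry k)) (hα : α < 1) (hε : 0 < ε) (hKT : 0 ≤ KT)
    {g : ℝ → ℂ} (hg : BddBorelOn T g) (n : ℕ) : BddBorelOn T ((Rop k lam)^[n] g) :=
  Function.Iterate.rec _ hg (fun _ h => hK.bddBorelOn_Rop hkm hα hε hKT h) n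

theorem norm_iterate_Rop_sub_le (hK : KernelBound k α ε T KT)
    (hkm : Measurable (Function.uncurry k)) (hα : α < 1) (hε : 0 < ε) (hKT : 0 ≤ KT)
    {f g : ℝ → ℂ} (hf : BddBorelOn T f) (hg : BddBorelOn T g) {C : ℝ} (hC : 0 ≤ C)
    (hgf : ∀ s ∈ Icc 0 T, ‖g s - f s‖ ≤ C) (n : ℕ) {t : ℝ} (ht : t ∈ Icc 0 T) :
    ‖(Rop k lam)^[n] g t - (Rop k lam)^[n] f t‖ ≤
      (‖lam‖ * KT) ^ n * (∏ l ∈ Finset.range n, holderFactor ε (l * (1 - α))) * C *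
        t ^ (n * (1 - α)) := by
  induction n generalizing t with
  | zero => simpa using hgf t ht
  | succ n ih =>
    have hprod : 0 ≤ ∏ l ∈ Finset.range n, holderFactor ε (l * (1 - α)) :=
      Finset.prod_nonneg fun l _ => holderFactor_nonneg hε.le (by nlinarith)
    rw [Function.iterate_succ_apply', Function.iterate_succ_apply']
    refine (hK.norm_Rop_sub_le hkm hα hε (hK.bddBorelOn_iterate_Rop hkm hα hε hKT hf n)
      (hK.bddBorelOn_iterate_Rop hkm hα hε hKT hg n) (by positivity) (by positivity)
      (fun s hs => ih hs) ht).trans_eq ?_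
    rw [Finset.prod_range_succ, Nat.cast_succ, show 1 - α + n * (1 - α) = (n + 1) * (1 - α) by ring]
    ring

end KernelBound

theorem stmt3_general (k : ℝ → ℝ → ℝ) (hkm : Measurable (Function.uncurry k))
    (α ε : ℝ) (hα1 : α < 1) (hε : 0 < ε)
    (T : ℝ) (KT : ℝ) (hKT0 : 0 ≤ KT)
    (hK : ∀ t : ℝ, 0 < t → t ≤ T →
      MeasureTheory.IntegrableOn (fun s => |k t s| ^ (1 + ε)) (Set.Ioc 0 t) ∧
      t ^ (α - 1 / (1 + ε)) *
        (∫ s in Set.Ioc (0:ℝ) t, |k t s| ^ (1 + ε)) ^ (1 / (1 + ε)) ≤ KT)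
    (lam : ℂ) :
    (∀ n : ℕ, ∀ f g : ℝ → ℂ, BddBorelOn T f → BddBorelOn T g →
      ∀ C : ℝ, 0 ≤ C → (∀ s ∈ Set.Icc (0:ℝ) T, ‖g s - f s‖ ≤ C) →
      ∀ t ∈ Set.Icc (0:ℝ) T,
        ‖(Rop k lam)^[n + 1] g t - (Rop k lam)^[n + 1] f t‖ ≤
          (‖lam‖ * KT * T ^ (1 - α)) ^ (n + 1) *
            (∏ l ∈ Finset.Icc 1 n,
              ((l : ℝ) * (1 - α) * (1 + 1 / ε) + 1) ^ (-(ε / (1 + ε)))) * C) ∧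
    Filter.Tendsto
      (fun n : ℕ => (‖lam‖ * KT * T ^ (1 - α)) ^ (n + 1) *
        ∏ l ∈ Finset.Icc 1 n,
          ((l : ℝ) * (1 - α) * (1 + 1 / ε) + 1) ^ (-(ε / (1 + ε))))
      Filter.atTop (nhds 0) := by
  simp only [← holderFactor.eq_1]
  have hKB : KernelBound k α ε T KT := hK
  refine ⟨fun n f g hf hg C hC hgf t ht => ?_, ?_⟩
  · have hP : 0 ≤ ∏ l ∈ Finset.Icc 1 n, holderFactor ε (l * (1 - α)) :=
      Finset.prod_nonneg fun l _ => holderFactor_nonneg hε.le (by nlinarith)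
    have hbound := hKB.norm_iterate_Rop_sub_le (lam := lam) hkm hα1 hε hKT0 hf hg hC hgf (n + 1) ht
    rw [Finset.prod_range_succ_eq_prod_Icc (by simp [holderFactor]), mul_comm _ (1 - α),
      Real.rpow_mul_natCast ht.1] at hbound
    calc _ ≤ _ := hbound
      _ ≤ (‖lam‖ * KT) ^ (n + 1) * (∏ l ∈ Finset.Icc 1 n, holderFactor ε (l * (1 - α))) * C *
            (T ^ (1 - α)) ^ (n + 1) := by
          have ht0 := ht.1
          gcongr
          exact ht.2
      _ = _ := by ring
  · refine tendsto_zero_of_succ_eq_mul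
      (r := fun n => ‖lam‖ * KT * T ^ (1 - α) * holderFactor ε ((n + 1 : ℕ) * (1 - α)))
      (fun n => by rw [Finset.prod_Icc_succ_top (by omega)]; ring) ?_
    simpa using ((tendsto_holderFactor_atTop hε).comp <|
      (tendsto_natCast_atTop_atTop.comp (tendsto_add_atTop_nat 1)).atTop_mul_const
        (sub_pos.2 hα1)).const_mul (‖lam‖ * KT * T ^ (1 - α))

theorem stmt3 (k : ℝ → ℝ → ℝ) (hkm : Measurable (Function.uncurry k))
    (α ε : ℝ) (hα0 : 0 ≤ α) (hα1 : α < 1) (hε : 0 < ε)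
    (T : ℝ) (hT : 0 < T) (KT : ℝ) (hKT0 : 0 ≤ KT)
    (hK : ∀ t : ℝ, 0 < t → t ≤ T →
      MeasureTheory.IntegrableOn (fun s => |k t s| ^ (1 + ε)) (Set.Ioc 0 t) ∧
      t ^ (α - 1 / (1 + ε)) *
        (∫ s in Set.Ioc (0:ℝ) t, |k t s| ^ (1 + ε)) ^ (1 / (1 + ε)) ≤ KT)
    (lam : ℂ) :
    (∀ n : ℕ, ∀ f g : ℝ → ℂ, BddBorelOn T f → BddBorelOn T g →
      ∀ C : ℝ, 0 ≤ C → (∀ s ∈ Set.Icc (0:ℝ) T, ‖g s - f s‖ ≤ C) →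
      ∀ t ∈ Set.Icc (0:ℝ) T,
        ‖(Rop k lam)^[n + 1] g t - (Rop k lam)^[n + 1] f t‖ ≤
          (‖lam‖ * KT * T ^ (1 - α)) ^ (n + 1) *
            (∏ l ∈ Finset.Icc 1 n,
              ((l : ℝ) * (1 - α) * (1 + 1 / ε) + 1) ^ (-(ε / (1 + ε)))) * C) ∧
    Filter.Tendsto
      (fun n : ℕ => (‖lam‖ * KT * T ^ (1 - α)) ^ (n + 1) *
        ∏ l ∈ Finset.Icc 1 n,
          ((l : ℝ) * (1 - α) * (1 + 1 / ε) + 1) ^ (-(ε / (1 + ε))))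
      Filter.atTop (nhds 0) :=
  stmt3_general k hkm α ε hα1 hε T KT hKT0 hK lam
end
end

section
/- Under Assumption (K) on the kernel k, the recursively defined coefficients c_n satisfy, for every T>0, every n∈ℕ with n≥1 and every t∈[0,T], the bound |c_n(t)| ≤ K_T^n T^{n(1−α*)} ∏_{l=1}^{n−1} (l(1−α*)(1+1/ε)+1)^{−ε/(1+ε)}; in particular all the integrals defining c_n exist and are finite. -/
/-!
Induction on `n`: if `|c_n s| ≤ B_n s^(n(1-α))` on `(0, T]` (with `B_n = coeffConst α ε KT n`),
Hölder's inequality with exponents `1 + ε` and `(1 + ε)/ε` bounds `∫₀ᵗ k(t,s) c_n(s) ds` by `B_n`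
times the `L^(1+ε)`-norm of `k(t,·)`, at most `K_T t^(1/(1+ε) - α)`, times the `L^((1+ε)/ε)`-norm
of `s ↦ s^(n(1-α))` on `(0, t]`, which is exactly
`t^(n(1-α) + ε/(1+ε)) (n(1-α)(1+1/ε)+1)^(-ε/(1+ε))`. The powers of `t` add up to
`(n+1)(1-α)`, so `B_{n+1} = K_T (n(1-α)(1+1/ε)+1)^(-ε/(1+ε)) B_n`.
-/

open MeasureTheory Filter

noncomputable section

noncomputable def coeff (k : ℝ → ℝ → ℝ) : ℕ → ℝ → ℝ
  | 0, _ => 1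
  | n + 1, t => if 0 < t then ∫ s in Set.Ioc (0:ℝ) t, k t s * coeff k n s else 0

noncomputable def Phi (k : ℝ → ℝ → ℝ) (t : ℝ) (l : ℂ) : ℂ :=
  ∑' n : ℕ, (coeff k n t : ℂ) * l ^ n

noncomputable def PhiR (k : ℝ → ℝ → ℝ) (t : ℝ) (x : ℝ) : ℝ :=
  ∑' n : ℕ, coeff k n t * x ^ n

open Set Finset

lemma measurable_setIntegral_Ioc {f : ℝ → ℝ → ℝ} (hf : Measurable (Function.uncurry f)) (a : ℝ) :
    Measurable fun t => ∫ s in Ioc a t, f t s := by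
  have hset : MeasurableSet {p : ℝ × ℝ | p.2 ∈ Ioc a p.1} :=
    (measurableSet_lt measurable_const measurable_snd).inter
      (measurableSet_le measurable_snd measurable_fst)
  have hind : Measurable fun p : ℝ × ℝ => (Ioc a p.1).indicator (f p.1) p.2 := by
    convert hf.indicator hset using 1
    ext p
    simp only [indicator_apply, mem_ofPred_eq]
    rfl
  simp_rw [← integral_indicator measurableSet_Ioc]
  exact hind.stronglyMeasurable.integral_prod_right'.measurable

lemma measurable_coeff {k : ℝ → ℝ → ℝ} (hk : Measurable (Function.uncurry k)) :
    ∀ n, Measurable (coeff k n)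
  | 0 => measurable_const
  | n + 1 =>
    Measurable.ite measurableSet_Ioi
      (measurable_setIntegral_Ioc (f := fun t s => k t s * coeff k n s)
        (hk.mul ((measurable_coeff hk n).comp measurable_snd)) 0)
      measurable_const

lemma coeff_succ_of_pos {k : ℝ → ℝ → ℝ} (n : ℕ) {t : ℝ} (ht : 0 < t) :
    coeff k (n + 1) t = ∫ s in Ioc 0 t, k t s * coeff k n s := if_pos ht

lemma coeff_succ_zero (k : ℝ → ℝ → ℝ) (n : ℕ) : coeff k (n + 1) 0 = 0 := if_neg (lt_irrefl 0)

lemma ae_restrict_Ioc_norm_rpow_le {t β : ℝ} (hβ : 0 ≤ β) :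
    ∀ᵐ s ∂volume.restrict (Ioc 0 t), ‖s ^ β‖ ≤ t ^ β := by
  filter_upwards [ae_restrict_mem measurableSet_Ioc] with s hs
  rw [Real.norm_eq_abs, abs_of_nonneg (Real.rpow_nonneg hs.1.le β)]
  exact Real.rpow_le_rpow hs.1.le hs.2 hβ

lemma integral_Ioc_rpow_rpow {t β q : ℝ} (ht : 0 < t) (hβ : 0 ≤ β) (hq : 0 < q) :
    (∫ s in Ioc 0 t, (s ^ β) ^ q) ^ (1 / q) = (β * q + 1) ^ (-(1 / q)) * t ^ (β + 1 / q) := by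
  have hγ : 0 < β * q + 1 := by positivity
  have hint : ∫ s in Ioc 0 t, (s ^ β) ^ q = t ^ (β * q + 1) / (β * q + 1) := by
    rw [setIntegral_congr_fun measurableSet_Ioc fun s hs => (Real.rpow_mul hs.1.le β q).symm,
      ← intervalIntegral.integral_of_le ht.le, integral_rpow (Or.inl (by linarith)),
      Real.zero_rpow hγ.ne', sub_zero]
  rw [hint, Real.div_rpow (by positivity) hγ.le, ← Real.rpow_mul ht.le, Real.rpow_neg hγ.le,
    div_eq_inv_mul]
  congr 2
  field_simp

lemma setIntegral_abs_mul_rpow_le {p q : ℝ} (hpq : p.HolderConjugate q) {t β : ℝ} (ht : 0 < t)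
    (hβ : 0 ≤ β) {f : ℝ → ℝ} (hf : MemLp f (ENNReal.ofReal p) (volume.restrict (Ioc 0 t))) :
    ∫ s in Ioc 0 t, |f s| * s ^ β ≤
      (∫ s in Ioc 0 t, |f s| ^ p) ^ (1 / p) * ((β * q + 1) ^ (-(1 / q)) * t ^ (β + 1 / q)) := by
  rw [← integral_Ioc_rpow_rpow ht hβ hpq.symm.pos]
  refine integral_mul_le_Lp_mul_Lq_of_nonneg hpq (Eventually.of_forall fun s => abs_nonneg _) ?_
    (by simpa only [Real.norm_eq_abs] using hf.norm)
    (MemLp.of_bound (by fun_prop) _ (ae_restrict_Ioc_norm_rpow_le hβ))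
  filter_upwards [ae_restrict_mem measurableSet_Ioc] with s hs
  exact Real.rpow_nonneg hs.1.le β

lemma abs_setIntegral_mul_le_of_abs_le_rpow {p q : ℝ} (hpq : p.HolderConjugate q) {t β C : ℝ}
    (ht : 0 < t) (hβ : 0 ≤ β) (hC : 0 ≤ C) {f g : ℝ → ℝ}
    (hf : MemLp f (ENNReal.ofReal p) (volume.restrict (Ioc 0 t)))
    (hg : ∀ s ∈ Ioc 0 t, |g s| ≤ C * s ^ β) :
    |∫ s in Ioc 0 t, f s * g s| ≤
      C * ((∫ s in Ioc 0 t, |f s| ^ p) ^ (1 / p) *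
        ((β * q + 1) ^ (-(1 / q)) * t ^ (β + 1 / q))) := by
  have hint : IntegrableOn (fun s => |f s| * s ^ β) (Ioc 0 t) :=
    (hf.integrable (ENNReal.one_le_ofReal.2 hpq.lt.le)).abs.mul_bdd (by fun_prop)
      (ae_restrict_Ioc_norm_rpow_le hβ)
  calc |∫ s in Ioc 0 t, f s * g s|
      ≤ ∫ s in Ioc 0 t, |f s * g s| := abs_integral_le_integral_abs
    _ ≤ ∫ s in Ioc 0 t, C * (|f s| * s ^ β) := by
      refine integral_mono_of_nonneg (Eventually.of_forall fun s => abs_nonneg _)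
        (hint.const_mul C) ?_
      filter_upwards [ae_restrict_mem measurableSet_Ioc] with s hs
      rw [abs_mul, mul_left_comm]
      exact mul_le_mul_of_nonneg_left (hg s hs) (abs_nonneg _)
    _ ≤ _ := by
      rw [integral_const_mul]
      exact mul_le_mul_of_nonneg_left (setIntegral_abs_mul_rpow_le hpq ht hβ hf) hC

section Bound

variable {k : ℝ → ℝ → ℝ} {α ε T KT : ℝ}

structure KernelLpBound (k : ℝ → ℝ → ℝ) (α ε T KT : ℝ) : Prop where
  memLp : ∀ t, 0 < t → t ≤ T → MemLp (k t) (ENNReal.ofReal (1 + ε)) (volume.restrict (Ioc 0 t))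
  rpow_mul_norm_le : ∀ t, 0 < t → t ≤ T →
    t ^ (α - 1 / (1 + ε)) * (∫ s in Ioc 0 t, |k t s| ^ (1 + ε)) ^ (1 / (1 + ε)) ≤ KT

lemma KernelLpBound.norm_le (hk : KernelLpBound k α ε T KT) {t : ℝ} (ht : 0 < t) (htT : t ≤ T) :
    (∫ s in Ioc 0 t, |k t s| ^ (1 + ε)) ^ (1 / (1 + ε)) ≤ KT * t ^ (1 / (1 + ε) - α) := by
  have := mul_le_mul_of_nonneg_left (hk.rpow_mul_norm_le t ht htT)
    (Real.rpow_nonneg ht.le (1 / (1 + ε) - α))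
  rwa [← mul_assoc, ← Real.rpow_add ht, sub_add_sub_cancel', sub_self, Real.rpow_zero,
    one_mul, mul_comm] at this

def coeffFactor (α ε : ℝ) (l : ℕ) : ℝ :=
  ((l : ℝ) * (1 - α) * (1 + 1 / ε) + 1) ^ (-(ε / (1 + ε)))

def coeffConst (α ε KT : ℝ) (n : ℕ) : ℝ :=
  KT ^ n * ∏ l ∈ range n, coeffFactor α ε l

lemma coeffFactor_nonneg (hα : α < 1) (hε : 0 < ε) (l : ℕ) : 0 ≤ coeffFactor α ε l := by
  have : 0 ≤ 1 - α := by linarith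
  unfold coeffFactor
  positivity

lemma coeffConst_nonneg (hα : α < 1) (hε : 0 < ε) (hKT : 0 ≤ KT) (n : ℕ) :
    0 ≤ coeffConst α ε KT n :=
  mul_nonneg (pow_nonneg hKT n) (prod_nonneg fun l _ => coeffFactor_nonneg hα hε l)

lemma coeffConst_succ (α ε KT : ℝ) (n : ℕ) :
    coeffConst α ε KT (n + 1) = coeffConst α ε KT n * (KT * coeffFactor α ε n) := by
  rw [coeffConst, coeffConst, prod_range_succ]
  ring

lemma coeffConst_succ_eq_prod_Icc (α ε KT : ℝ) (n : ℕ) :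
    coeffConst α ε KT (n + 1) = KT ^ (n + 1) * ∏ l ∈ Icc 1 n, coeffFactor α ε l := by
  rw [coeffConst, prod_range_succ', range_eq_Ico, prod_Ico_add', zero_add,
    Finset.Ico_add_one_right_eq_Icc]
  simp [coeffFactor]

lemma abs_coeff_le (hα : α < 1) (hε : 0 < ε) (hKT : 0 ≤ KT)
    (hk : KernelLpBound k α ε T KT) (n : ℕ) {t : ℝ} (ht : 0 < t) (htT : t ≤ T) :
    |coeff k n t| ≤ coeffConst α ε KT n * t ^ (n * (1 - α)) := by
  induction n generalizing t with
  | zero => simp [coeff, coeffConst]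
  | succ n ih =>
    set β : ℝ := n * (1 - α) with hβ_def
    have hβ : 0 ≤ β := mul_nonneg n.cast_nonneg (by linarith)
    have hpq : (1 + ε).HolderConjugate ((1 + ε) / ε) := by
      rw [Real.holderConjugate_iff_eq_conjExponent (by linarith)]
      ring_nf
    have hfactor : (β * ((1 + ε) / ε) + 1) ^ (-(1 / ((1 + ε) / ε))) = coeffFactor α ε n := by
      rw [coeffFactor, one_div_div]
      congr 2
      field_simp
      rw [hβ_def]
      ring
    have hexp : 1 / (1 + ε) - α + (β + 1 / ((1 + ε) / ε)) = ((n + 1 : ℕ) : ℝ) * (1 - α) := by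
      have := hpq.one_div_add_one_div
      push_cast
      linarith
    rw [coeff_succ_of_pos n ht]
    calc |∫ s in Ioc 0 t, k t s * coeff k n s|
        ≤ coeffConst α ε KT n * ((∫ s in Ioc 0 t, |k t s| ^ (1 + ε)) ^ (1 / (1 + ε)) *
            ((β * ((1 + ε) / ε) + 1) ^ (-(1 / ((1 + ε) / ε))) * t ^ (β + 1 / ((1 + ε) / ε)))) :=
          abs_setIntegral_mul_le_of_abs_le_rpow hpq ht hβ (coeffConst_nonneg hα hε hKT n)
            (hk.memLp t ht htT) fun s hs => ih hs.1 (hs.2.trans htT)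
      _ ≤ coeffConst α ε KT n * (KT * t ^ (1 / (1 + ε) - α) *
            (coeffFactor α ε n * t ^ (β + 1 / ((1 + ε) / ε)))) := by
          rw [hfactor]
          have := hk.norm_le ht htT
          have := coeffConst_nonneg hα hε hKT n
          have := coeffFactor_nonneg hα hε n
          gcongr
      _ = coeffConst α ε KT (n + 1) * t ^ (((n + 1 : ℕ) : ℝ) * (1 - α)) := by
          rw [coeffConst_succ, ← hexp, Real.rpow_add ht (1 / (1 + ε) - α)]
          ring

lemma abs_coeff_le_of_le (hα : α < 1) (hε : 0 < ε) (hKT : 0 ≤ KT)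
    (hk : KernelLpBound k α ε T KT) (n : ℕ) {t : ℝ} (ht : 0 < t) (htT : t ≤ T) :
    |coeff k n t| ≤ coeffConst α ε KT n * T ^ (n * (1 - α)) := by
  refine (abs_coeff_le hα hε hKT hk n ht htT).trans ?_
  have : 0 ≤ (n : ℝ) * (1 - α) := mul_nonneg n.cast_nonneg (by linarith)
  have := coeffConst_nonneg hα hε hKT n
  gcongr

lemma integrableOn_mul_coeff (hkm : Measurable (Function.uncurry k)) (hα : α < 1) (hε : 0 < ε)
    (hKT : 0 ≤ KT) (hk : KernelLpBound k α ε T KT) (n : ℕ) {t : ℝ} (ht : 0 < t) (htT : t ≤ T) :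
    IntegrableOn (fun s => k t s * coeff k n s) (Ioc 0 t) := by
  refine ((hk.memLp t ht htT).integrable (ENNReal.one_le_ofReal.2 (by linarith))).mul_bdd
    (c := coeffConst α ε KT n * T ^ (n * (1 - α))) (measurable_coeff hkm n).aestronglyMeasurable ?_
  filter_upwards [ae_restrict_mem measurableSet_Ioc] with s hs
  exact abs_coeff_le_of_le hα hε hKT hk n hs.1 (hs.2.trans htT)

end Bound

theorem stmt5_general (k : ℝ → ℝ → ℝ) (hkm : Measurable (Function.uncurry k))
    (α ε : ℝ) (hα1 : α < 1) (hε : 0 < ε)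
    (T : ℝ) (KT : ℝ) (hKT0 : 0 ≤ KT)
    (hK : ∀ t : ℝ, 0 < t → t ≤ T →
      MeasureTheory.IntegrableOn (fun s => |k t s| ^ (1 + ε)) (Set.Ioc 0 t) ∧
      t ^ (α - 1 / (1 + ε)) *
        (∫ s in Set.Ioc (0:ℝ) t, |k t s| ^ (1 + ε)) ^ (1 / (1 + ε)) ≤ KT) :
    ∀ n : ℕ,
      (∀ t : ℝ, 0 < t → t ≤ T →
        MeasureTheory.IntegrableOn (fun s => k t s * coeff k n s) (Set.Ioc 0 t)) ∧
      (∀ t ∈ Set.Icc (0:ℝ) T,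
        |coeff k (n + 1) t| ≤ KT ^ (n + 1) * T ^ (((n : ℝ) + 1) * (1 - α)) *
          ∏ l ∈ Finset.Icc 1 n,
            ((l : ℝ) * (1 - α) * (1 + 1 / ε) + 1) ^ (-(ε / (1 + ε)))) := by
  have hk : KernelLpBound k α ε T KT := by
    refine ⟨fun t ht htT => ?_, fun t ht htT => (hK t ht htT).2⟩
    have hkt : Measurable (k t) := hkm.comp measurable_prodMk_left
    rw [← integrable_norm_rpow_iff hkt.aestronglyMeasurable (by simp; linarith)
      ENNReal.ofReal_ne_top, ENNReal.toReal_ofReal (by linarith)]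
    simpa only [Real.norm_eq_abs, IntegrableOn] using (hK t ht htT).1
  intro n
  refine ⟨fun t ht htT => integrableOn_mul_coeff hkm hα1 hε hKT0 hk n ht htT, ?_⟩
  rintro t ⟨ht0, htT⟩
  have key : |coeff k (n + 1) t| ≤
      coeffConst α ε KT (n + 1) * T ^ (((n + 1 : ℕ) : ℝ) * (1 - α)) := by
    rcases ht0.eq_or_lt with rfl | ht
    · rw [coeff_succ_zero, abs_zero]
      exact mul_nonneg (coeffConst_nonneg hα1 hε hKT0 _) (Real.rpow_nonneg htT _)
    · exact abs_coeff_le_of_le hα1 hε hKT0 hk (n + 1) ht htT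
  rw [coeffConst_succ_eq_prod_Icc] at key
  push_cast at key
  simpa only [coeffFactor, mul_right_comm] using key

theorem stmt5 (k : ℝ → ℝ → ℝ) (hkm : Measurable (Function.uncurry k))
    (α ε : ℝ) (hα0 : 0 ≤ α) (hα1 : α < 1) (hε : 0 < ε)
    (T : ℝ) (hT : 0 < T) (KT : ℝ) (hKT0 : 0 ≤ KT)
    (hK : ∀ t : ℝ, 0 < t → t ≤ T →
      MeasureTheory.IntegrableOn (fun s => |k t s| ^ (1 + ε)) (Set.Ioc 0 t) ∧
      t ^ (α - 1 / (1 + ε)) *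
        (∫ s in Set.Ioc (0:ℝ) t, |k t s| ^ (1 + ε)) ^ (1 / (1 + ε)) ≤ KT) :
    ∀ n : ℕ,
      (∀ t : ℝ, 0 < t → t ≤ T →
        MeasureTheory.IntegrableOn (fun s => k t s * coeff k n s) (Set.Ioc 0 t)) ∧
      (∀ t ∈ Set.Icc (0:ℝ) T,
        |coeff k (n + 1) t| ≤ KT ^ (n + 1) * T ^ (((n : ℝ) + 1) * (1 - α)) *
          ∏ l ∈ Finset.Icc 1 n,
            ((l : ℝ) * (1 - α) * (1 + 1 / ε) + 1) ^ (-(ε / (1 + ε)))) :=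
  stmt5_general k hkm α ε hα1 hε T KT hKT0 hK
end
end
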